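/- Let U, V, X, A, Y, Z be random variables on finite sets forming the Markov chain U − V − (X, A) − (Y, Z), and let R_k, R_w, Δ, C be nonnegative reals satisfying the chosen-secret single-letter bounds: R_k ≤ I(V; Y | A, U) − I(V; Z | A, U), R_w ≥ I(X; A, V) − I(U; Y | A) − I(V; Z | A, U), and Δ ≥ I(X; A, V, Y) + I(X; Z | A, U) − I(X; Y | A, U). Then R_w − R_k ≥ I(X; A) + I(V; X | A, Y); that is, the tuple (R_k, R_w − R_k, Δ, C) satisfies the generated-secret single-letter bounds with the same auxiliary random variables. -/
import Mathlib


open MeasureTheory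

/-- `prob μ X x = P[X = x]`. -/
noncomputable def prob {Ω : Type*} [MeasurableSpace Ω] (μ : Measure Ω)
    {α : Type*} (X : Ω → α) (x : α) : ℝ :=
  (μ (X ⁻¹' {x})).toReal

/-- Shannon entropy (in bits) of a random variable with values in a finite set. -/
noncomputable def ent {Ω : Type*} [MeasurableSpace Ω] (μ : Measure Ω)
    {α : Type*} [Fintype α] (X : Ω → α) : ℝ :=
  ∑ x : α, -(prob μ X x * Real.logb 2 (prob μ X x))

/-- Conditional entropy `H(X | Y)` in bits. -/
noncomputable def condEnt {Ω : Type*} [MeasurableSpace Ω] (μ : Measure Ω)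
    {α β : Type*} [Fintype α] [Fintype β] (X : Ω → α) (Y : Ω → β) : ℝ :=
  ent μ (fun ω => (X ω, Y ω)) - ent μ Y

/-- Mutual information `I(X; Y)` in bits. -/
noncomputable def mutInf {Ω : Type*} [MeasurableSpace Ω] (μ : Measure Ω)
    {α β : Type*} [Fintype α] [Fintype β] (X : Ω → α) (Y : Ω → β) : ℝ :=
  ent μ X + ent μ Y - ent μ (fun ω => (X ω, Y ω))

/-- Conditional mutual information `I(X; Y | Z)` in bits. -/
noncomputable def condMutInf {Ω : Type*} [MeasurableSpace Ω] (μ : Measure Ω)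
    {α β γ : Type*} [Fintype α] [Fintype β] [Fintype γ]
    (X : Ω → α) (Y : Ω → β) (Z : Ω → γ) : ℝ :=
  condEnt μ X Z - condEnt μ X (fun ω => (Y ω, Z ω))

/-- `X` and `Y` are conditionally independent given `Z`:
`P[X=x, Y=y, Z=z] · P[Z=z] = P[X=x, Z=z] · P[Y=y, Z=z]` for all values. -/
def CondIndepRV {Ω : Type*} [MeasurableSpace Ω] (μ : Measure Ω)
    {α β γ : Type*} (X : Ω → α) (Y : Ω → β) (Z : Ω → γ) : Prop :=
  ∀ (x : α) (y : β) (z : γ),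
    prob μ (fun ω => ((X ω, Y ω), Z ω)) ((x, y), z) * prob μ Z z =
      prob μ (fun ω => (X ω, Z ω)) (x, z) * prob μ (fun ω => (Y ω, Z ω)) (y, z)

set_option linter.unusedSectionVars false
set_option linter.unusedVariables false

section Aux
variable {Ω : Type*} [MeasurableSpace Ω] (μ : Measure Ω) [IsProbabilityMeasure μ]

lemma prob_congr {α β : Type*} (f : Ω → α) (g : Ω → β) (a : α) (b : β)
    (h : ∀ ω, f ω = a ↔ g ω = b) : prob μ f a = prob μ g b := by
  unfold prob
  have hs : f ⁻¹' {a} = g ⁻¹' {b} := by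
    ext ω
    simpa using h ω
  rw [hs]

lemma prob_eq_zero {α : Type*} (f : Ω → α) (a : α)
    (h : ∀ ω, f ω ≠ a) : prob μ f a = 0 := by
  unfold prob
  have hs : f ⁻¹' {a} = ∅ := by
    ext ω
    simpa using h ω
  rw [hs, measure_empty, ENNReal.toReal_zero]

lemma ent_comp_inj {α β : Type*} [Fintype α] [Fintype β] (f : Ω → α) (e : α → β)
    (he : Function.Injective e) :
    ent μ (fun ω => e (f ω)) = ent μ f := by
  classical
  unfold ent
  rw [← Finset.sum_subset (Finset.subset_univ (Finset.univ.image e))]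
  · rw [Finset.sum_image (fun a _ b _ h => he h)]
    refine Finset.sum_congr rfl fun a _ => ?_
    have h0 : prob μ (fun ω => e (f ω)) (e a) = prob μ f a :=
      prob_congr μ _ f (e a) a (fun ω => by simp [he.eq_iff])
    rw [h0]
  · intro b _ hb
    have h0 : prob μ (fun ω => e (f ω)) b = 0 := by
      apply prob_eq_zero
      intro ω hbe
      exact hb (Finset.mem_image.mpr ⟨f ω, Finset.mem_univ _, hbe⟩)
    simp [h0]

lemma prob_marginal {σ τ : Type*} [Fintype σ]
    [MeasurableSpace σ] [MeasurableSingletonClass σ]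
    [MeasurableSpace τ] [MeasurableSingletonClass τ]
    (S : Ω → σ) (T : Ω → τ) (hS : Measurable S) (hT : Measurable T) (t : τ) :
    prob μ T t = ∑ s : σ, prob μ (fun ω => (S ω, T ω)) (s, t) := by
  unfold prob
  rw [← ENNReal.toReal_sum (fun a _ => measure_ne_top μ _)]
  congr 1
  have hset : T ⁻¹' {t} = ⋃ s ∈ (Finset.univ : Finset σ),
      ((fun ω => (S ω, T ω)) ⁻¹' {(s, t)}) := by
    ext ω
    simp [Prod.ext_iff]
  rw [hset, measure_biUnion_finset]
  · intro a _ b _ hab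
    simp only [Function.onFun]
    apply Set.disjoint_left.mpr
    intro ω h1 h2
    apply hab
    simp only [Set.mem_preimage, Set.mem_singleton_iff, Prod.ext_iff] at h1 h2
    rw [← h1.1, ← h2.1]
  · intro s _
    exact (hS.prodMk hT) (measurableSet_singleton _)


lemma CondIndepRV.symm' {α β γ : Type*} {X : Ω → α} {Y : Ω → β} {Z : Ω → γ}
    (h : CondIndepRV μ X Y Z) : CondIndepRV μ Y X Z := by
  intro y x z
  have hs : prob μ (fun ω => ((Y ω, X ω), Z ω)) ((y, x), z)
      = prob μ (fun ω => ((X ω, Y ω), Z ω)) ((x, y), z) := by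
    apply prob_congr
    intro ω
    simp only [Prod.ext_iff]
    tauto
  rw [hs, h x y z, mul_comm]

lemma CondIndepRV.map_right {α β β' γ : Type*} [Fintype β]
    [MeasurableSpace α] [MeasurableSingletonClass α]
    [MeasurableSpace β] [MeasurableSingletonClass β]
    [MeasurableSpace β'] [MeasurableSingletonClass β']
    [MeasurableSpace γ] [MeasurableSingletonClass γ]
    {X : Ω → α} {Y : Ω → β} {Z : Ω → γ} (m : β → β')
    (hX : Measurable X) (hY : Measurable Y) (hZ : Measurable Z)
    (hmY : Measurable (fun ω => m (Y ω)))
    (h : CondIndepRV μ X Y Z) : CondIndepRV μ X (fun ω => m (Y ω)) Z := by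
  classical
  intro x y' z
  have h1 : prob μ (fun ω => ((X ω, m (Y ω)), Z ω)) ((x, y'), z)
      = ∑ y : β, if m y = y'
          then prob μ (fun ω => ((X ω, Y ω), Z ω)) ((x, y), z) else 0 := by
    rw [prob_marginal μ Y (fun ω => ((X ω, m (Y ω)), Z ω)) hY
      ((hX.prodMk hmY).prodMk hZ) ((x, y'), z)]
    refine Finset.sum_congr rfl fun y _ => ?_
    by_cases hy : m y = y'
    · rw [if_pos hy]
      apply prob_congr
      intro ω
      subst hy
      simp only [Prod.ext_iff]
      constructor
      · rintro ⟨h1, ⟨h2, _⟩, h3⟩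
        exact ⟨⟨h2, h1⟩, h3⟩
      · rintro ⟨⟨h2, h1⟩, h3⟩
        subst h1
        exact ⟨rfl, ⟨h2, rfl⟩, h3⟩
    · rw [if_neg hy]
      apply prob_eq_zero
      intro ω hc
      apply hy
      simp only [Prod.ext_iff] at hc
      rw [← hc.1, hc.2.1.2]
  have h2 : prob μ (fun ω => (m (Y ω), Z ω)) (y', z)
      = ∑ y : β, if m y = y'
          then prob μ (fun ω => (Y ω, Z ω)) (y, z) else 0 := by
    rw [prob_marginal μ Y (fun ω => (m (Y ω), Z ω)) hY
      (hmY.prodMk hZ) (y', z)]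
    refine Finset.sum_congr rfl fun y _ => ?_
    by_cases hy : m y = y'
    · rw [if_pos hy]
      apply prob_congr
      intro ω
      subst hy
      simp only [Prod.ext_iff]
      constructor
      · rintro ⟨h1, _, h3⟩
        exact ⟨h1, h3⟩
      · rintro ⟨h1, h3⟩
        subst h1
        exact ⟨rfl, rfl, h3⟩
    · rw [if_neg hy]
      apply prob_eq_zero
      intro ω hc
      apply hy
      simp only [Prod.ext_iff] at hc
      rw [← hc.1, hc.2.1]
  rw [h1, h2, Finset.sum_mul, Finset.mul_sum]
  refine Finset.sum_congr rfl fun y _ => ?_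
  by_cases hy : m y = y'
  · rw [if_pos hy, if_pos hy, h x y z]
  · rw [if_neg hy, if_neg hy, zero_mul, mul_zero]

lemma CondIndepRV.map_left {α α' β γ : Type*} [Fintype α]
    [MeasurableSpace α] [MeasurableSingletonClass α]
    [MeasurableSpace α'] [MeasurableSingletonClass α']
    [MeasurableSpace β] [MeasurableSingletonClass β]
    [MeasurableSpace γ] [MeasurableSingletonClass γ]
    {X : Ω → α} {Y : Ω → β} {Z : Ω → γ} (m : α → α')
    (hX : Measurable X) (hY : Measurable Y) (hZ : Measurable Z)
    (hmX : Measurable (fun ω => m (X ω)))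
    (h : CondIndepRV μ X Y Z) : CondIndepRV μ (fun ω => m (X ω)) Y Z :=
  (CondIndepRV.map_right μ m hY hX hZ hmX (h.symm' μ)).symm' μ

lemma CondIndepRV.weakUnion {α β γ δ : Type*} [Fintype α] [Fintype β] [Fintype δ]
    [MeasurableSpace α] [MeasurableSingletonClass α]
    [MeasurableSpace β] [MeasurableSingletonClass β]
    [MeasurableSpace γ] [MeasurableSingletonClass γ]
    [MeasurableSpace δ] [MeasurableSingletonClass δ]
    {X : Ω → α} {Y : Ω → β} {Z : Ω → γ} {W : Ω → δ}
    (hX : Measurable X) (hY : Measurable Y) (hZ : Measurable Z) (hW : Measurable W)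
    (h : CondIndepRV μ X (fun ω => (W ω, Y ω)) Z) :
    CondIndepRV μ X Y (fun ω => (W ω, Z ω)) := by
  classical
  intro x y wz
  obtain ⟨w, z⟩ := wz
  set q : α → δ → β → γ → ℝ := fun x' w' y' z' =>
    prob μ (fun ω => ((X ω, (W ω, Y ω)), Z ω)) ((x', (w', y')), z') with hq
  set pZ : γ → ℝ := fun z' => prob μ Z z' with hpZ
  set pXZ : α → γ → ℝ := fun x' z' => prob μ (fun ω => (X ω, Z ω)) (x', z') with hpXZ
  set pWYZ : δ → β → γ → ℝ := fun w' y' z' =>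
    prob μ (fun ω => ((W ω, Y ω), Z ω)) ((w', y'), z') with hpWYZ
  have hqnn : ∀ x' w' y' z', 0 ≤ q x' w' y' z' := fun _ _ _ _ => ENNReal.toReal_nonneg
  -- translations of the goal's probabilities
  have g1 : prob μ (fun ω => ((X ω, Y ω), (W ω, Z ω))) ((x, y), (w, z)) = q x w y z := by
    apply prob_congr
    intro ω
    simp only [Prod.ext_iff]
    tauto
  have g2 : prob μ (fun ω => (W ω, Z ω)) (w, z) = ∑ x' : α, ∑ y' : β, q x' w y' z := by
    rw [prob_marginal μ (fun ω => (X ω, Y ω)) (fun ω => (W ω, Z ω))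
      (hX.prodMk hY) (hW.prodMk hZ) (w, z), Fintype.sum_prod_type]
    refine Finset.sum_congr rfl fun x' _ => Finset.sum_congr rfl fun y' _ => ?_
    apply prob_congr
    intro ω
    simp only [Prod.ext_iff]
    tauto
  have g3 : prob μ (fun ω => (X ω, (W ω, Z ω))) (x, (w, z)) = ∑ y' : β, q x w y' z := by
    rw [prob_marginal μ Y (fun ω => (X ω, (W ω, Z ω))) hY
      (hX.prodMk (hW.prodMk hZ)) (x, (w, z))]
    refine Finset.sum_congr rfl fun y' _ => ?_
    apply prob_congr
    intro ω
    simp only [Prod.ext_iff]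
    tauto
  have g4 : prob μ (fun ω => (Y ω, (W ω, Z ω))) (y, (w, z)) = pWYZ w y z := by
    rw [prob_marginal μ X (fun ω => (Y ω, (W ω, Z ω))) hX
      (hY.prodMk (hW.prodMk hZ)) (y, (w, z)), hpWYZ]
    simp only
    rw [prob_marginal μ X (fun ω => ((W ω, Y ω), Z ω)) hX
      ((hW.prodMk hY).prodMk hZ) ((w, y), z)]
    refine Finset.sum_congr rfl fun x' _ => ?_
    apply prob_congr
    intro ω
    simp only [Prod.ext_iff]
    tauto
  -- marginals of q
  have hq_wyz : ∀ w' y' z', pWYZ w' y' z' = ∑ x' : α, q x' w' y' z' := by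
    intro w' y' z'
    rw [hpWYZ]
    simp only
    rw [prob_marginal μ X (fun ω => ((W ω, Y ω), Z ω)) hX
      ((hW.prodMk hY).prodMk hZ) ((w', y'), z')]
    refine Finset.sum_congr rfl fun x' _ => ?_
    apply prob_congr
    intro ω
    simp only [Prod.ext_iff]
    tauto
  have hq_xz : ∀ x' z', pXZ x' z' = ∑ w' : δ, ∑ y' : β, q x' w' y' z' := by
    intro x' z'
    rw [hpXZ]
    simp only
    rw [prob_marginal μ (fun ω => (W ω, Y ω)) (fun ω => (X ω, Z ω))
      (hW.prodMk hY) (hX.prodMk hZ) (x', z'), Fintype.sum_prod_type]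
    refine Finset.sum_congr rfl fun w' _ => Finset.sum_congr rfl fun y' _ => ?_
    apply prob_congr
    intro ω
    simp only [Prod.ext_iff]
    tauto
  have hq_z : ∀ z', pZ z' = ∑ x' : α, ∑ w' : δ, ∑ y' : β, q x' w' y' z' := by
    intro z'
    rw [hpZ]
    simp only
    rw [prob_marginal μ (fun ω => (X ω, (W ω, Y ω))) Z
      (hX.prodMk (hW.prodMk hY)) hZ z', Fintype.sum_prod_type]
    refine Finset.sum_congr rfl fun x' _ => ?_
    rw [Fintype.sum_prod_type]
  have hrel : ∀ x' w' y', q x' w' y' z * pZ z = pXZ x' z * pWYZ w' y' z := fun x' w' y' =>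
    h x' (w', y') z
  rw [g1, g2, g3, g4]
  by_cases hz : pZ z = 0
  · have hq0 : ∀ x' w' y', q x' w' y' z = 0 := by
      intro x' w' y'
      have h0 : (0:ℝ) = ∑ x' : α, ∑ w' : δ, ∑ y' : β, q x' w' y' z := by
        rw [← hq_z z, hz]
      have := (Finset.sum_eq_zero_iff_of_nonneg (fun i _ =>
        Finset.sum_nonneg fun j _ => Finset.sum_nonneg fun k _ => hqnn i j k z)).mp h0.symm
      have h1 := (Finset.sum_eq_zero_iff_of_nonneg (fun j _ =>
        Finset.sum_nonneg fun k _ => hqnn x' j k z)).mp (this x' (Finset.mem_univ _))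
      have h2 := (Finset.sum_eq_zero_iff_of_nonneg (fun k _ =>
        hqnn x' w' k z)).mp (h1 w' (Finset.mem_univ _))
      exact h2 y' (Finset.mem_univ _)
    simp [hq0]
  · -- pZ z > 0
    have key : ∀ x' w' y', q x' w' y' z = pXZ x' z * pWYZ w' y' z / pZ z := by
      intro x' w' y'
      field_simp
      exact hrel x' w' y'
    have hsum_xz : ∑ x' : α, pXZ x' z = pZ z := by
      rw [hq_z z]
      refine Finset.sum_congr rfl fun x' _ => hq_xz x' z
    calc q x w y z * (∑ x' : α, ∑ y' : β, q x' w y' z)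
        = (pXZ x z * pWYZ w y z / pZ z) *
          (∑ x' : α, ∑ y' : β, pXZ x' z * pWYZ w y' z / pZ z) := by
          rw [key]
          congr 1
          refine Finset.sum_congr rfl fun x' _ => Finset.sum_congr rfl fun y' _ => key x' w y'
      _ = (pXZ x z * pWYZ w y z / pZ z) *
          ((∑ x' : α, pXZ x' z) * (∑ y' : β, pWYZ w y' z) / pZ z) := by
          congr 1
          rw [Finset.sum_mul_sum]
          rw [Finset.sum_div]
          refine Finset.sum_congr rfl fun x' _ => ?_
          rw [Finset.sum_div]
      _ = (∑ y' : β, q x w y' z) * pWYZ w y z := by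
          rw [hsum_xz]
          have : (∑ y' : β, q x w y' z) = pXZ x z * (∑ y' : β, pWYZ w y' z) / pZ z := by
            rw [Finset.mul_sum, Finset.sum_div]
            refine Finset.sum_congr rfl fun y' _ => key x w y'
          rw [this]
          field_simp

lemma condMutInf_eq_zero {α β γ : Type*} [Fintype α] [Fintype β] [Fintype γ]
    [MeasurableSpace α] [MeasurableSingletonClass α]
    [MeasurableSpace β] [MeasurableSingletonClass β]
    [MeasurableSpace γ] [MeasurableSingletonClass γ]
    (X : Ω → α) (Y : Ω → β) (Z : Ω → γ)
    (hX : Measurable X) (hY : Measurable Y) (hZ : Measurable Z)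
    (h : CondIndepRV μ X Y Z) : condMutInf μ X Y Z = 0 := by
  classical
  set p3 : α → β → γ → ℝ := fun x y z =>
    prob μ (fun ω => ((X ω, Y ω), Z ω)) ((x, y), z) with hp3
  set pZ : γ → ℝ := fun z => prob μ Z z with hpZ
  set pXZ : α → γ → ℝ := fun x z => prob μ (fun ω => (X ω, Z ω)) (x, z) with hpXZ
  set pYZ : β → γ → ℝ := fun y z => prob μ (fun ω => (Y ω, Z ω)) (y, z) with hpYZ
  have hnn : ∀ x y z, 0 ≤ p3 x y z := fun _ _ _ => ENNReal.toReal_nonneg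
  have hZm : ∀ z, pZ z = ∑ x : α, ∑ y : β, p3 x y z := by
    intro z
    rw [hpZ]
    simp only
    rw [prob_marginal μ (fun ω => (X ω, Y ω)) Z (hX.prodMk hY) hZ z,
      Fintype.sum_prod_type]
  have hXZm : ∀ x z, pXZ x z = ∑ y : β, p3 x y z := by
    intro x z
    rw [hpXZ]
    simp only
    rw [prob_marginal μ Y (fun ω => (X ω, Z ω)) hY (hX.prodMk hZ) (x, z)]
    refine Finset.sum_congr rfl fun y _ => ?_
    apply prob_congr
    intro ω
    simp only [Prod.ext_iff]
    tauto
  have hYZm : ∀ y z, pYZ y z = ∑ x : α, p3 x y z := by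
    intro y z
    rw [hpYZ]
    simp only
    rw [prob_marginal μ X (fun ω => (Y ω, Z ω)) hX (hY.prodMk hZ) (y, z)]
    refine Finset.sum_congr rfl fun x _ => ?_
    apply prob_congr
    intro ω
    simp only [Prod.ext_iff]
    tauto
  have E_Z : ent μ Z = ∑ z : γ, ∑ x : α, ∑ y : β,
      -(p3 x y z * Real.logb 2 (pZ z)) := by
    rw [show ent μ Z = ∑ z : γ, -(pZ z * Real.logb 2 (pZ z)) from rfl]
    refine Finset.sum_congr rfl fun z _ => ?_
    nth_rewrite 1 [hZm z]
    simp only [Finset.sum_mul, ← Finset.sum_neg_distrib]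
  have E_XZ : ent μ (fun ω => (X ω, Z ω)) = ∑ z : γ, ∑ x : α, ∑ y : β,
      -(p3 x y z * Real.logb 2 (pXZ x z)) := by
    rw [show ent μ (fun ω => (X ω, Z ω)) = ∑ p : α × γ,
      -(prob μ (fun ω => (X ω, Z ω)) p * Real.logb 2 (prob μ (fun ω => (X ω, Z ω)) p))
        from rfl, Fintype.sum_prod_type, Finset.sum_comm]
    refine Finset.sum_congr rfl fun z _ => Finset.sum_congr rfl fun x _ => ?_
    have hx : prob μ (fun ω => (X ω, Z ω)) (x, z) = pXZ x z := rfl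
    rw [hx]
    nth_rewrite 1 [hXZm x z]
    simp only [Finset.sum_mul, ← Finset.sum_neg_distrib]
  have E_YZ : ent μ (fun ω => (Y ω, Z ω)) = ∑ z : γ, ∑ x : α, ∑ y : β,
      -(p3 x y z * Real.logb 2 (pYZ y z)) := by
    rw [show ent μ (fun ω => (Y ω, Z ω)) = ∑ p : β × γ,
      -(prob μ (fun ω => (Y ω, Z ω)) p * Real.logb 2 (prob μ (fun ω => (Y ω, Z ω)) p))
        from rfl, Fintype.sum_prod_type, Finset.sum_comm]
    refine Finset.sum_congr rfl fun z _ => ?_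
    rw [Finset.sum_comm]
    refine Finset.sum_congr rfl fun y _ => ?_
    have hy : prob μ (fun ω => (Y ω, Z ω)) (y, z) = pYZ y z := rfl
    rw [hy]
    nth_rewrite 1 [hYZm y z]
    simp only [Finset.sum_mul, ← Finset.sum_neg_distrib]
  have E_XYZ : ent μ (fun ω => (X ω, (Y ω, Z ω))) = ∑ z : γ, ∑ x : α, ∑ y : β,
      -(p3 x y z * Real.logb 2 (p3 x y z)) := by
    rw [show ent μ (fun ω => (X ω, (Y ω, Z ω))) = ∑ p : α × (β × γ),
      -(prob μ (fun ω => (X ω, (Y ω, Z ω))) p *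
        Real.logb 2 (prob μ (fun ω => (X ω, (Y ω, Z ω))) p)) from rfl,
      Fintype.sum_prod_type]
    have hcong : ∀ x y z, prob μ (fun ω => (X ω, (Y ω, Z ω))) (x, (y, z)) = p3 x y z := by
      intro x y z
      apply prob_congr
      intro ω
      simp only [Prod.ext_iff]
      tauto
    have hres : (∑ z : γ, ∑ x : α, ∑ y : β, -(p3 x y z * Real.logb 2 (p3 x y z)))
        = ∑ x : α, ∑ y : β, ∑ z : γ, -(p3 x y z * Real.logb 2 (p3 x y z)) := by
      rw [Finset.sum_comm]
      exact Finset.sum_congr rfl fun x _ => Finset.sum_comm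
    rw [hres]
    refine Finset.sum_congr rfl fun x _ => ?_
    rw [Fintype.sum_prod_type]
    refine Finset.sum_congr rfl fun y _ => Finset.sum_congr rfl fun z _ => ?_
    rw [hcong x y z]
  simp only [condMutInf, condEnt]
  rw [E_XZ, E_Z, E_YZ, E_XYZ]
  simp only [← Finset.sum_sub_distrib]
  refine Finset.sum_eq_zero fun z _ => ?_
  refine Finset.sum_eq_zero fun x _ => ?_
  refine Finset.sum_eq_zero fun y _ => ?_
  by_cases hp : p3 x y z = 0
  · simp [hp]
  · have hp3pos : 0 < p3 x y z := lt_of_le_of_ne (hnn x y z) (Ne.symm hp)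
    have hXZpos : 0 < pXZ x z := by
      rw [hXZm x z]
      calc (0:ℝ) < p3 x y z := hp3pos
        _ ≤ ∑ y' : β, p3 x y' z :=
          Finset.single_le_sum (fun i _ => hnn x i z) (Finset.mem_univ y)
    have hYZpos : 0 < pYZ y z := by
      rw [hYZm y z]
      calc (0:ℝ) < p3 x y z := hp3pos
        _ ≤ ∑ x' : α, p3 x' y z :=
          Finset.single_le_sum (fun i _ => hnn i y z) (Finset.mem_univ x)
    have hZpos : 0 < pZ z := by
      rw [hZm z]
      calc (0:ℝ) < pXZ x z := hXZpos
        _ = ∑ y' : β, p3 x y' z := hXZm x z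
        _ ≤ ∑ x' : α, ∑ y' : β, p3 x' y' z :=
          Finset.single_le_sum
            (fun i _ => Finset.sum_nonneg fun j _ => hnn i j z) (Finset.mem_univ x)
    have hm : p3 x y z * pZ z = pXZ x z * pYZ y z := h x y z
    have hlog := congrArg (Real.logb 2) hm
    rw [Real.logb_mul (ne_of_gt hp3pos) (ne_of_gt hZpos),
      Real.logb_mul (ne_of_gt hXZpos) (ne_of_gt hYZpos)] at hlog
    linear_combination (p3 x y z) * hlog

end Aux

/-- If `(R_k, R_w, Δ, C)` satisfies the chosen-secret single-letter bounds with auxiliary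
random variables forming the Markov chain `U − V − (X,A) − (Y,Z)`, then
`(R_k, R_w − R_k, Δ, C)` satisfies the generated-secret single-letter bounds with the
same auxiliary random variables; in particular `R_w − R_k ≥ I(X;A) + I(V;X|A,Y)`. -/
theorem stmt11 {Ω 𝒰 𝒱 𝒳 𝒜 𝒴 𝒵 : Type*} [MeasurableSpace Ω]
    (μ : Measure Ω) [IsProbabilityMeasure μ]
    [Fintype 𝒰] [Fintype 𝒱] [Fintype 𝒳] [Fintype 𝒜] [Fintype 𝒴] [Fintype 𝒵]
    [MeasurableSpace 𝒰] [MeasurableSingletonClass 𝒰]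
    [MeasurableSpace 𝒱] [MeasurableSingletonClass 𝒱]
    [MeasurableSpace 𝒳] [MeasurableSingletonClass 𝒳]
    [MeasurableSpace 𝒜] [MeasurableSingletonClass 𝒜]
    [MeasurableSpace 𝒴] [MeasurableSingletonClass 𝒴]
    [MeasurableSpace 𝒵] [MeasurableSingletonClass 𝒵]
    (U : Ω → 𝒰) (V : Ω → 𝒱) (X : Ω → 𝒳) (A : Ω → 𝒜) (Y : Ω → 𝒴) (Z : Ω → 𝒵)
    (hU : Measurable U) (hV : Measurable V) (hX : Measurable X)
    (hA : Measurable A) (hY : Measurable Y) (hZ : Measurable Z)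
    (hMarkov1 : CondIndepRV μ U (fun ω => (X ω, A ω, Y ω, Z ω)) V)
    (hMarkov2 : CondIndepRV μ (fun ω => (U ω, V ω)) (fun ω => (Y ω, Z ω))
      (fun ω => (X ω, A ω)))
    (Rk Rw Δ C : ℝ) (hRk0 : 0 ≤ Rk) (hRw0 : 0 ≤ Rw) (hΔ0 : 0 ≤ Δ) (hC0 : 0 ≤ C)
    (hRk : Rk ≤ condMutInf μ V Y (fun ω => (A ω, U ω)) -
      condMutInf μ V Z (fun ω => (A ω, U ω)))
    (hRw : Rw ≥ mutInf μ X (fun ω => (A ω, V ω)) - condMutInf μ U Y A -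
      condMutInf μ V Z (fun ω => (A ω, U ω)))
    (hΔ : Δ ≥ mutInf μ X (fun ω => (A ω, V ω, Y ω)) +
      condMutInf μ X Z (fun ω => (A ω, U ω)) - condMutInf μ X Y (fun ω => (A ω, U ω))) :
    Rk ≤ condMutInf μ V Y (fun ω => (A ω, U ω)) -
        condMutInf μ V Z (fun ω => (A ω, U ω)) ∧
    Rw - Rk ≥ mutInf μ X A + condMutInf μ V X (fun ω => (A ω, Y ω)) ∧
    Δ ≥ mutInf μ X (fun ω => (A ω, V ω, Y ω)) +
        condMutInf μ X Z (fun ω => (A ω, U ω)) -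
        condMutInf μ X Y (fun ω => (A ω, U ω)) := by
    -- Step 1: U ⊥ (A,Y) | V  (decomposition from Markov chain 1)
  have hAY : CondIndepRV μ U (fun ω => (A ω, Y ω)) V :=
    CondIndepRV.map_right μ (fun p : 𝒳 × 𝒜 × 𝒴 × 𝒵 => (p.2.1, p.2.2.1))
      hU (hX.prodMk (hA.prodMk (hY.prodMk hZ))) hV (hA.prodMk hY) hMarkov1
  -- Step 2: U ⊥ Y | (A,V)  (weak union)
  have hUYAV : CondIndepRV μ U Y (fun ω => (A ω, V ω)) :=
    CondIndepRV.weakUnion μ hU hY hV hA hAY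
  have hZ1 : condMutInf μ U Y (fun ω => (A ω, V ω)) = 0 :=
    condMutInf_eq_zero μ U Y (fun ω => (A ω, V ω)) hU hY (hA.prodMk hV) hUYAV
  -- Step 3: V ⊥ Y | (X,A)  (decomposition from Markov chain 2)
  have hM2a : CondIndepRV μ V (fun ω => (Y ω, Z ω)) (fun ω => (X ω, A ω)) :=
    CondIndepRV.map_left μ (Prod.snd : 𝒰 × 𝒱 → 𝒱) (hU.prodMk hV)
      (hY.prodMk hZ) (hX.prodMk hA) hV hMarkov2
  have hVY : CondIndepRV μ V Y (fun ω => (X ω, A ω)) :=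
    CondIndepRV.map_right μ (Prod.fst : 𝒴 × 𝒵 → 𝒴) hV (hY.prodMk hZ)
      (hX.prodMk hA) hY hM2a
  have hZ2 : condMutInf μ V Y (fun ω => (X ω, A ω)) = 0 :=
    condMutInf_eq_zero μ V Y (fun ω => (X ω, A ω)) hV hY (hX.prodMk hA) hVY
  -- entropy bridges
  have b1 : ent μ (fun ω => (X ω, (A ω, V ω))) = ent μ (fun ω => (V ω, (X ω, A ω))) := by
    have h0 := ent_comp_inj μ (fun ω => (V ω, (X ω, A ω)))
      (fun p => (p.2.1, (p.2.2, p.1)))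
      (by rintro ⟨v, x, a⟩ ⟨v', x', a'⟩ hh; simp_all [Prod.ext_iff])
    exact h0
  have b2 : ent μ (fun ω => (U ω, A ω)) = ent μ (fun ω => (A ω, U ω)) := by
    have h0 := ent_comp_inj μ (fun ω => (A ω, U ω))
      (fun p => (p.2, p.1))
      (by rintro ⟨a, u⟩ ⟨a', u'⟩ hh; simp_all [Prod.ext_iff])
    exact h0
  have b3 : ent μ (fun ω => (U ω, (Y ω, A ω))) = ent μ (fun ω => (Y ω, (A ω, U ω))) := by
    have h0 := ent_comp_inj μ (fun ω => (Y ω, (A ω, U ω)))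
      (fun p => (p.2.2, (p.1, p.2.1)))
      (by rintro ⟨y, a, u⟩ ⟨y', a', u'⟩ hh; simp_all [Prod.ext_iff])
    exact h0
  have b4 : ent μ (fun ω => (Y ω, A ω)) = ent μ (fun ω => (A ω, Y ω)) := by
    have h0 := ent_comp_inj μ (fun ω => (A ω, Y ω))
      (fun p => (p.2, p.1))
      (by rintro ⟨a, y⟩ ⟨a', y'⟩ hh; simp_all [Prod.ext_iff])
    exact h0
  have b5 : ent μ (fun ω => (V ω, (A ω, U ω))) = ent μ (fun ω => (U ω, (A ω, V ω))) := by
    have h0 := ent_comp_inj μ (fun ω => (U ω, (A ω, V ω)))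
      (fun p => (p.2.2, (p.2.1, p.1)))
      (by rintro ⟨u, a, v⟩ ⟨u', a', v'⟩ hh; simp_all [Prod.ext_iff])
    exact h0
  have b6 : ent μ (fun ω => (V ω, (Y ω, (A ω, U ω)))) =
      ent μ (fun ω => (U ω, (Y ω, (A ω, V ω)))) := by
    have h0 := ent_comp_inj μ (fun ω => (U ω, (Y ω, (A ω, V ω))))
      (fun p => (p.2.2.2, (p.2.1, (p.2.2.1, p.1))))
      (by rintro ⟨u, y, a, v⟩ ⟨u', y', a', v'⟩ hh; simp_all [Prod.ext_iff])
    exact h0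
  have b7 : ent μ (fun ω => (V ω, (A ω, Y ω))) = ent μ (fun ω => (Y ω, (A ω, V ω))) := by
    have h0 := ent_comp_inj μ (fun ω => (Y ω, (A ω, V ω)))
      (fun p => (p.2.2, (p.2.1, p.1)))
      (by rintro ⟨y, a, v⟩ ⟨y', a', v'⟩ hh; simp_all [Prod.ext_iff])
    exact h0
  have b8 : ent μ (fun ω => (X ω, (A ω, Y ω))) = ent μ (fun ω => (Y ω, (X ω, A ω))) := by
    have h0 := ent_comp_inj μ (fun ω => (Y ω, (X ω, A ω)))
      (fun p => (p.2.1, (p.2.2, p.1)))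
      (by rintro ⟨y, x, a⟩ ⟨y', x', a'⟩ hh; simp_all [Prod.ext_iff])
    exact h0
  have b9 : ent μ (fun ω => (V ω, (X ω, (A ω, Y ω)))) =
      ent μ (fun ω => (V ω, (Y ω, (X ω, A ω)))) := by
    have h0 := ent_comp_inj μ (fun ω => (V ω, (Y ω, (X ω, A ω))))
      (fun p => (p.1, (p.2.2.1, (p.2.2.2, p.2.1))))
      (by rintro ⟨v, y, x, a⟩ ⟨v', y', x', a'⟩ hh; simp_all [Prod.ext_iff])
    exact h0
  refine ⟨hRk, ?_, hΔ⟩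
  simp only [mutInf, condMutInf, condEnt] at hRw hRk hZ1 hZ2 ⊢
  linarith [b1, b2, b3, b4, b5, b6, b7, b8, b9]
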